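/- Let g be an (n+1)×(n+1) upper triangular real matrix with positive diagonal entries, bottom-right entry g_{n+1,n+1} = 1, and g ≠ I. Let ĝ be the induced affine automorphism of ℝ^n_lex given by ĝ(x)_i = Σ_{j≤n} g_{i,j} x_j + g_{i,n+1}. Then ĝ is rigid and hyperbolic if and only if g is essentially hyperbolic. -/

import Mathlib

/-- `Fin n → R` with the lexicographic order in which the **last** coordinate is the most
significant: `x < y` iff `x ≠ y` and `x i < y i` at the largest index `i` where `x` and `y`
differ. -/
def LexPow (R : Type*) (n : ℕ) : Type _ := Fin n → R

namespace LexPow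

variable {R : Type*} {n : ℕ}

/-- The identity bijection between `Fin n → R` and `LexPow R n`. -/
def of : (Fin n → R) ≃ LexPow R n := Equiv.refl _

instance : CoeFun (LexPow R n) (fun _ => Fin n → R) := ⟨fun x => x⟩

instance [AddCommGroup R] : AddCommGroup (LexPow R n) :=
  inferInstanceAs (AddCommGroup (Fin n → R))

/-- The map reversing coordinates, into the Mathlib lexicographic order (in which the *first*
coordinate is most significant). -/
def toRevLex (x : LexPow R n) : Lex (Fin n → R) :=
  toLex (fun i : Fin n => of.symm x (Fin.rev i))

theorem toRevLex_injective : Function.Injective (toRevLex (R := R) (n := n)) := by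
  intro a b hab
  refine of.symm.injective (funext fun i => ?_)
  have h := congrFun (congrArg ofLex hab) (Fin.rev i)
  simpa [toRevLex, Fin.rev_rev] using h

noncomputable instance [LinearOrder R] : LinearOrder (LexPow R n) :=
  LinearOrder.lift' (toRevLex (R := R) (n := n)) toRevLex_injective

instance [AddCommGroup R] [LinearOrder R] [IsOrderedAddMonoid R] :
    IsOrderedAddMonoid (LexPow R n) where
  add_le_add_left := fun a b hab c => by
    show toRevLex (a + c) ≤ toRevLex (b + c)
    have h : toRevLex a ≤ toRevLex b := hab
    exact add_le_add_left h (toRevLex c)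

end LexPow

/-- An orientation-preserving affine automorphism of a linearly ordered abelian group `Λ`:
an order-preserving bijection `g` of `Λ` admitting an order-preserving group automorphism
`dilation` (the dilation factor) with `g x - g y = dilation (x - y)` for all `x, y`. -/
structure OPAffineAut (Λ : Type*) [AddCommGroup Λ] [LinearOrder Λ] [IsOrderedAddMonoid Λ] extends Λ ≃ Λ where
  strictMono' : StrictMono toEquiv
  dilation : Λ ≃+ Λ
  dilation_strictMono : StrictMono dilation
  affine : ∀ x y : Λ, toEquiv x - toEquiv y = dilation (x - y)

namespace OPAffineAut

variable {Λ : Type*} [AddCommGroup Λ] [LinearOrder Λ] [IsOrderedAddMonoid Λ]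

instance : CoeFun (OPAffineAut Λ) (fun _ => Λ → Λ) := ⟨fun f => f.toEquiv⟩

theorem ext' {f g : OPAffineAut Λ} (h : ∀ x, f x = g x) : f = g := by
  have he : f.toEquiv = g.toEquiv := Equiv.ext h
  have hd : f.dilation = g.dilation := AddEquiv.ext fun x => by
    have hf := f.affine x 0
    have hg := g.affine x 0
    rw [sub_zero] at hf hg
    rw [← hf, ← hg]
    show f x - f 0 = g x - g 0
    rw [h x, h 0]
  cases f; cases g
  cases he; cases hd
  rfl

instance : Group (OPAffineAut Λ) where
  one :=
    { toEquiv := Equiv.refl Λ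
      strictMono' := strictMono_id
      dilation := AddEquiv.refl Λ
      dilation_strictMono := strictMono_id
      affine := fun _ _ => rfl }
  mul f g :=
    { toEquiv := g.toEquiv.trans f.toEquiv
      strictMono' := f.strictMono'.comp g.strictMono'
      dilation := g.dilation.trans f.dilation
      dilation_strictMono := f.dilation_strictMono.comp g.dilation_strictMono
      affine := fun x y => by
        simp only [Equiv.trans_apply, AddEquiv.trans_apply]
        rw [f.affine, g.affine] }
  inv f :=
    { toEquiv := f.toEquiv.symm
      strictMono' := fun a b hab => f.strictMono'.lt_iff_lt.1 (by
        simpa only [Equiv.apply_symm_apply] using hab)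
      dilation := f.dilation.symm
      dilation_strictMono := fun a b hab => f.dilation_strictMono.lt_iff_lt.1 (by
        simpa only [AddEquiv.apply_symm_apply] using hab)
      affine := fun x y => f.dilation.injective (by
        rw [AddEquiv.apply_symm_apply, ← f.affine, Equiv.apply_symm_apply,
          Equiv.apply_symm_apply]) }
  mul_assoc f g h := ext' fun _ => rfl
  one_mul f := ext' fun _ => rfl
  mul_one f := ext' fun _ => rfl
  inv_mul_cancel f := ext' fun x => f.toEquiv.symm_apply_apply x

@[simp] theorem mul_apply (f g : OPAffineAut Λ) (x : Λ) : (f * g) x = f (g x) := rfl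
@[simp] theorem one_apply (x : Λ) : (1 : OPAffineAut Λ) x = x := rfl
@[simp] theorem inv_apply (f : OPAffineAut Λ) (x : Λ) : f⁻¹ x = f.toEquiv.symm x := rfl

/-- An affine automorphism is *hyperbolic* if it has no fixed point. -/
def Hyperbolic (f : OPAffineAut Λ) : Prop := ∀ x : Λ, f x ≠ x

/-- An affine automorphism is *rigid* if for `ε = ±1`, whenever `f^ε` moves some point up,
it moves every point up. -/
def Rigid (f : OPAffineAut Λ) : Prop :=
  ∀ ε : ℤ, ε = 1 ∨ ε = -1 → (∃ x : Λ, x < (f ^ ε) x) → ∀ y : Λ, y < (f ^ ε) y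

end OPAffineAut

/-- An orientation-preserving affine action (a homomorphism into the group of
orientation-preserving affine automorphisms) is *free* if every nontrivial group element
acts without fixed points. -/
def AffineActionFree {G Λ : Type*} [Group G] [AddCommGroup Λ] [LinearOrder Λ] [IsOrderedAddMonoid Λ]
    (ρ : G →* OPAffineAut Λ) : Prop :=
  ∀ g : G, g ≠ 1 → ∀ x : Λ, ρ g x ≠ x

/-- An orientation-preserving affine action is *essentially free* if every nontrivial group
element acts as a rigid hyperbolic affine automorphism. -/
def AffineActionEssentiallyFree {G Λ : Type*} [Group G] [AddCommGroup Λ] [LinearOrder Λ] [IsOrderedAddMonoid Λ]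
    (ρ : G →* OPAffineAut Λ) : Prop :=
  ∀ g : G, g ≠ 1 → (ρ g).Rigid ∧ (ρ g).Hyperbolic

/-- `G` admits an essentially free orientation-preserving affine action on `Λ`. -/
def HasEssentiallyFreeAffineAction (G : Type*) [Group G] (Λ : Type*)
    [AddCommGroup Λ] [LinearOrder Λ] [IsOrderedAddMonoid Λ] : Prop :=
  ∃ ρ : G →* OPAffineAut Λ, AffineActionEssentiallyFree ρ

section Matrices

variable {R : Type*} {n : ℕ}

theorem diag_mul_of_triangular [CommRing R] {A B : Matrix (Fin n) (Fin n) R}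
    (hA : A.BlockTriangular id) (hB : B.BlockTriangular id) (i : Fin n) :
    (A * B) i i = A i i * B i i := by
  rw [Matrix.mul_apply]
  apply Finset.sum_eq_single i
  · intro k _ hk
    rcases lt_or_gt_of_ne hk with h | h
    · rw [hA (show (id : Fin n → Fin n) k < id i from h), zero_mul]
    · rw [hB (show (id : Fin n → Fin n) i < id k from h), mul_zero]
  · intro h; exact absurd (Finset.mem_univ i) h

/-- The group `UT(n,R)` of upper triangular `n × n` matrices over `R` with all diagonal
entries equal to `1`, realised as a subgroup of the group of units of the matrix ring. -/
def UT (n : ℕ) (R : Type*) [CommRing R] : Subgroup (Matrix (Fin n) (Fin n) R)ˣ where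
  carrier := {A | (∀ i j : Fin n, j < i → (A : Matrix (Fin n) (Fin n) R) i j = 0) ∧
    ∀ i : Fin n, (A : Matrix (Fin n) (Fin n) R) i i = 1}
  one_mem' := by
    refine ⟨fun i j hij => ?_, fun i => ?_⟩
    · simp [Matrix.one_apply, (ne_of_lt hij).symm]
    · simp
  mul_mem' := by
    rintro A B ⟨hA1, hA2⟩ ⟨hB1, hB2⟩
    have hA : (A : Matrix (Fin n) (Fin n) R).BlockTriangular id := fun i j h => hA1 i j h
    have hB : (B : Matrix (Fin n) (Fin n) R).BlockTriangular id := fun i j h => hB1 i j h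
    refine ⟨fun i j hij => ?_, fun i => ?_⟩
    · exact (hA.mul hB) (show (id : Fin n → Fin n) j < id i from hij)
    · rw [Units.val_mul, diag_mul_of_triangular hA hB, hA2, hB2, one_mul]
  inv_mem' := by
    rintro A ⟨hA1, hA2⟩
    have hA : (A : Matrix (Fin n) (Fin n) R).BlockTriangular id := fun i j h => hA1 i j h
    haveI := A.invertible
    have hAinv : ((A : Matrix (Fin n) (Fin n) R)⁻¹).BlockTriangular id :=
      Matrix.blockTriangular_inv_of_blockTriangular hA
    have hcoe : ((A⁻¹ : (Matrix (Fin n) (Fin n) R)ˣ) : Matrix (Fin n) (Fin n) R)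
        = (A : Matrix (Fin n) (Fin n) R)⁻¹ := Matrix.coe_units_inv A
    refine ⟨fun i j hij => ?_, fun i => ?_⟩
    · rw [hcoe]; exact hAinv (show (id : Fin n → Fin n) j < id i from hij)
    · have h1 : ((A : Matrix (Fin n) (Fin n) R) * (A : Matrix (Fin n) (Fin n) R)⁻¹) i i = 1 := by
        rw [Matrix.mul_inv_of_invertible]; simp
      rw [diag_mul_of_triangular hA hAinv, hA2, one_mul] at h1
      rw [hcoe, h1]

/-- The group `T*(n,R)` of upper triangular `n × n` matrices over a linearly ordered field `R`
with positive diagonal entries, realised as a subgroup of the units of the matrix ring. -/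
def Tstar (n : ℕ) (R : Type*) [Field R] [LinearOrder R] [IsStrictOrderedRing R] : Subgroup (Matrix (Fin n) (Fin n) R)ˣ where
  carrier := {A | (∀ i j : Fin n, j < i → (A : Matrix (Fin n) (Fin n) R) i j = 0) ∧
    ∀ i : Fin n, 0 < (A : Matrix (Fin n) (Fin n) R) i i}
  one_mem' := by
    refine ⟨fun i j hij => ?_, fun i => ?_⟩
    · simp [Matrix.one_apply, (ne_of_lt hij).symm]
    · simp
  mul_mem' := by
    rintro A B ⟨hA1, hA2⟩ ⟨hB1, hB2⟩
    have hA : (A : Matrix (Fin n) (Fin n) R).BlockTriangular id := fun i j h => hA1 i j h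
    have hB : (B : Matrix (Fin n) (Fin n) R).BlockTriangular id := fun i j h => hB1 i j h
    refine ⟨fun i j hij => ?_, fun i => ?_⟩
    · exact (hA.mul hB) (show (id : Fin n → Fin n) j < id i from hij)
    · rw [Units.val_mul, diag_mul_of_triangular hA hB]
      exact mul_pos (hA2 i) (hB2 i)
  inv_mem' := by
    rintro A ⟨hA1, hA2⟩
    have hA : (A : Matrix (Fin n) (Fin n) R).BlockTriangular id := fun i j h => hA1 i j h
    haveI := A.invertible
    have hAinv : ((A : Matrix (Fin n) (Fin n) R)⁻¹).BlockTriangular id :=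
      Matrix.blockTriangular_inv_of_blockTriangular hA
    have hcoe : ((A⁻¹ : (Matrix (Fin n) (Fin n) R)ˣ) : Matrix (Fin n) (Fin n) R)
        = (A : Matrix (Fin n) (Fin n) R)⁻¹ := Matrix.coe_units_inv A
    refine ⟨fun i j hij => ?_, fun i => ?_⟩
    · rw [hcoe]; exact hAinv (show (id : Fin n → Fin n) j < id i from hij)
    · have h1 : ((A : Matrix (Fin n) (Fin n) R) * (A : Matrix (Fin n) (Fin n) R)⁻¹) i i = 1 := by
        rw [Matrix.mul_inv_of_invertible]; simp
      rw [diag_mul_of_triangular hA hAinv] at h1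
      rw [hcoe]
      rcases lt_trichotomy ((A : Matrix (Fin n) (Fin n) R)⁻¹ i i) 0 with h | h | h
      · exact absurd h1 (by nlinarith [hA2 i])
      · rw [h, mul_zero] at h1; exact absurd h1 zero_ne_one
      · exact h

/-- The last index of `Fin N` (any element of `Fin N` witnesses `0 < N`). -/
def lastOf {N : ℕ} (r : Fin N) : Fin N := ⟨N - 1, Nat.sub_lt r.pos Nat.one_pos⟩

/-- A square matrix `g` (upper triangular, with positive diagonal and bottom-right entry `1`)
is *essentially hyperbolic* if `g ≠ 1` and there is a row index `r` which is not the last row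
such that `(g-1)_{r,N} ≠ 0` (where `N` is the last column) and every nonzero entry of `g - 1`
lies either in a row strictly above `r`, or at position `(r, N)`. -/
def EssentiallyHyperbolic {N : ℕ} {R : Type*} [CommRing R]
    (g : Matrix (Fin N) (Fin N) R) : Prop :=
  g ≠ 1 ∧ ∃ r : Fin N, (r : ℕ) + 1 < N ∧ (g - 1) r (lastOf r) ≠ 0 ∧
    ∀ i j : Fin N, (g - 1) i j ≠ 0 → i < r ∨ (i = r ∧ j = lastOf r)

end Matrices

/-- The group of order-preserving additive automorphisms of a linearly ordered abelian
group `Λ`, as a subgroup of `AddAut Λ`. -/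
def orderAddAut (Λ : Type*) [AddCommGroup Λ] [LinearOrder Λ] [IsOrderedAddMonoid Λ] : Subgroup (Multiplicative (AddAut Λ)) where
  carrier := {f | StrictMono ⇑(Multiplicative.toAdd f : AddAut Λ)}
  one_mem' := strictMono_id
  mul_mem' := by
    intro f g hf hg a b hab
    exact hf (hg hab)
  inv_mem' := by
    intro f hf a b hab
    exact hf.lt_iff_lt.1 (by simpa using hab)

/-! Let `r` be the last nonzero row of `g - 1`; it is not row `N`, since `g` is upper
triangular with `g_{N,N} = 1`. The map `ĝ` fixes every coordinate of index greater than `r`,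
so the comparison of `x` with `ĝ x` is decided by the `r`-th coordinate of `ĝ x - x`, an
affine function of `x` whose coefficients are the entries of row `r` of `g - 1`. If its only
nonzero coefficient is the constant one `(g - 1)_{r,N}`, all points move in the same
direction and `ĝ` is rigid and hyperbolic. Otherwise it takes the values `1` and `-1`, so `ĝ`
moves some point up and another down, which rigidity forbids. -/

theorem LexPow.lt_of_eq_above_of_lt {R : Type*} [LinearOrder R] {n : ℕ} {a b : LexPow R n}
    (k : Fin n) (h_eq : ∀ j, k < j → a j = b j) (h_lt : a k < b k) : a < b := by
  show Pi.Lex (· < ·) (@fun _ => (· < ·)) (fun i : Fin n => a i.rev) (fun i : Fin n => b i.rev)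
  refine ⟨k.rev, fun j hj => h_eq _ ?_, by simpa [Fin.rev_rev] using h_lt⟩
  exact Fin.lt_rev_iff.1 hj

namespace OPAffineAut

variable {Λ : Type*} [AddCommGroup Λ] [LinearOrder Λ] [IsOrderedAddMonoid Λ] (f : OPAffineAut Λ)

theorem lt_inv_apply_iff {x : Λ} : x < f⁻¹ x ↔ f x < x := by
  rw [← f.strictMono'.lt_iff_lt, inv_apply, Equiv.apply_symm_apply]

theorem rigid_iff :
    f.Rigid ↔ ((∃ x, x < f x) → ∀ y, y < f y) ∧ ((∃ x, f x < x) → ∀ y, f y < y) := by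
  simp only [Rigid, forall_eq_or_imp, forall_eq, zpow_one, zpow_neg_one, lt_inv_apply_iff]

theorem rigid_and_hyperbolic_of_forall_lt (h : ∀ x, x < f x) : f.Rigid ∧ f.Hyperbolic :=
  ⟨f.rigid_iff.2 ⟨fun _ => h, fun ⟨x, hx⟩ => absurd (h x) hx.not_gt⟩, fun x => (h x).ne'⟩

theorem rigid_and_hyperbolic_of_forall_gt (h : ∀ x, f x < x) : f.Rigid ∧ f.Hyperbolic :=
  ⟨f.rigid_iff.2 ⟨fun ⟨x, hx⟩ => absurd (h x) hx.not_gt, fun _ => h⟩, fun x => (h x).ne⟩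

theorem not_rigid_of_lt_of_gt {x y : Λ} (hx : x < f x) (hy : f y < y) : ¬f.Rigid :=
  fun hf => ((f.rigid_iff.1 hf).1 ⟨x, hx⟩ y).not_gt hy

end OPAffineAut

theorem Matrix.exists_last_nonzero_row {R : Type*} [Zero R] {m k : ℕ}
    {M : Matrix (Fin m) (Fin k) R} (hM : M ≠ 0) :
    ∃ r, (∃ j, M r j ≠ 0) ∧ ∀ i, r < i → ∀ j, M i j = 0 := by
  classical
  have hS : (Finset.univ.filter fun i => ∃ j, M i j ≠ 0).Nonempty := by
    by_contra h
    exact hM (Matrix.ext fun i j => by_contra fun hij => h ⟨i, by simpa using ⟨j, hij⟩⟩)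
  obtain ⟨r, hr, hmax⟩ := Finset.exists_max_image _ id hS
  refine ⟨r, by simpa using hr, fun i hi j => by_contra fun hij => hi.not_ge ?_⟩
  exact hmax i (by simpa using ⟨j, hij⟩)

section InducedMap

variable {R : Type*} {n : ℕ}

theorem sub_one_last_row_eq_zero [CommRing R] {g : Matrix (Fin (n + 1)) (Fin (n + 1)) R}
    (hut : ∀ i j : Fin (n + 1), j < i → g i j = 0) (hbr : g (Fin.last n) (Fin.last n) = 1)
    (j : Fin (n + 1)) : (g - 1) (Fin.last n) j = 0 := by
  cases j using Fin.lastCases with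
  | last => simp [hbr]
  | cast j =>
    simp [hut _ _ (Fin.castSucc_lt_last j), Matrix.one_apply_ne (Fin.castSucc_lt_last j).ne']

theorem essentiallyHyperbolic_iff [CommRing R] {g : Matrix (Fin (n + 1)) (Fin (n + 1)) R} :
    EssentiallyHyperbolic g ↔ ∃ r : Fin n, (g - 1) r.castSucc (Fin.last n) ≠ 0 ∧
      (∀ j : Fin n, (g - 1) r.castSucc j.castSucc = 0) ∧
      ∀ i, r.castSucc < i → ∀ j, (g - 1) i j = 0 := by
  have hlastOf (r : Fin (n + 1)) : lastOf r = Fin.last n := Fin.ext (by simp [lastOf])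
  simp only [EssentiallyHyperbolic, hlastOf]
  constructor
  · rintro ⟨-, r, hrn, hb, hsupp⟩
    obtain ⟨r, rfl⟩ := Fin.exists_castSucc_eq.2 (Fin.ne_of_lt (Fin.lt_def.2 (by simpa using hrn)))
    refine ⟨r, hb, fun j => by_contra fun hj => ?_, fun i hi j => by_contra fun hij => ?_⟩
    · rcases hsupp _ _ hj with h | ⟨-, h⟩
      exacts [h.false, (Fin.castSucc_lt_last j).ne h]
    · rcases hsupp _ _ hij with h | ⟨h, -⟩
      exacts [hi.not_gt h, hi.ne' h]
  · rintro ⟨r, hb, hsq, habove⟩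
    refine ⟨fun h => hb (by simp [h]), r.castSucc, by simp, hb, fun i j hij => ?_⟩
    rcases lt_trichotomy i r.castSucc with h | rfl | h
    · exact Or.inl h
    · cases j using Fin.lastCases with
      | last => exact Or.inr ⟨rfl, rfl⟩
      | cast j => exact absurd (hsq j) hij
    · exact absurd (habove i h j) hij

variable [Field R] [LinearOrder R] [IsStrictOrderedRing R]

def OPAffineAut.IsInducedBy (f : OPAffineAut (LexPow R n))
    (g : Matrix (Fin (n + 1)) (Fin (n + 1)) R) : Prop :=
  ∀ (x : Fin n → R) (i : Fin n), LexPow.of.symm (f (LexPow.of x)) i =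
    (∑ j : Fin n, g i.castSucc j.castSucc * x j) + g i.castSucc (Fin.last n)

namespace OPAffineAut.IsInducedBy

variable {f : OPAffineAut (LexPow R n)} {g : Matrix (Fin (n + 1)) (Fin (n + 1)) R}

theorem apply_eq_add (hf : f.IsInducedBy g) (x : Fin n → R) (i : Fin n) :
    f (LexPow.of x) i = x i +
      ((∑ j : Fin n, (g - 1) i.castSucc j.castSucc * x j) + (g - 1) i.castSucc (Fin.last n)) := by
  have hsum : ∑ j : Fin n, (1 : Matrix (Fin (n + 1)) (Fin (n + 1)) R) i.castSucc j.castSucc * x j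
      = x i := by
    simp [Matrix.one_apply, Fin.castSucc_inj]
  rw [show f (LexPow.of x) i = _ from hf x i, Matrix.sub_apply,
    Matrix.one_apply_ne (Fin.castSucc_lt_last i).ne]
  simp only [Matrix.sub_apply, sub_mul, Finset.sum_sub_distrib, hsum]
  ring

theorem apply_eq_add_of_linear_row_eq_zero (hf : f.IsInducedBy g) {i : Fin n}
    (hi : ∀ j : Fin n, (g - 1) i.castSucc j.castSucc = 0) (x : Fin n → R) :
    f (LexPow.of x) i = x i + (g - 1) i.castSucc (Fin.last n) := by
  simp [hf.apply_eq_add, hi]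

theorem apply_eq_of_row_eq_zero (hf : f.IsInducedBy g) {i : Fin n}
    (hi : ∀ j, (g - 1) i.castSucc j = 0) (x : Fin n → R) : f (LexPow.of x) i = x i := by
  simp [hf.apply_eq_add_of_linear_row_eq_zero (fun j => hi _), hi]

theorem apply_single_sub (hf : f.IsInducedBy g) (i j : Fin n) (t : R) :
    f (LexPow.of (Pi.single j t)) i - (Pi.single j t : Fin n → R) i =
      (g - 1) i.castSucc j.castSucc * t + (g - 1) i.castSucc (Fin.last n) := by
  simp [hf.apply_eq_add, Pi.single_apply, mul_ite]

theorem rigid_and_hyperbolic (hf : f.IsInducedBy g) {r : Fin n}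
    (hb : (g - 1) r.castSucc (Fin.last n) ≠ 0)
    (hsq : ∀ j : Fin n, (g - 1) r.castSucc j.castSucc = 0)
    (habove : ∀ i, r.castSucc < i → ∀ j, (g - 1) i j = 0) : f.Rigid ∧ f.Hyperbolic := by
  have hfix (x : LexPow R n) (i : Fin n) (hi : r < i) : f x i = x i :=
    hf.apply_eq_of_row_eq_zero (habove _ (Fin.castSucc_lt_castSucc_iff.2 hi)) x
  have hr (x : LexPow R n) : f x r = x r + (g - 1) r.castSucc (Fin.last n) :=
    hf.apply_eq_add_of_linear_row_eq_zero hsq x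
  rcases hb.lt_or_gt with hneg | hpos
  · refine f.rigid_and_hyperbolic_of_forall_gt fun x => ?_
    exact LexPow.lt_of_eq_above_of_lt r (hfix x) (by rw [hr]; linarith)
  · refine f.rigid_and_hyperbolic_of_forall_lt fun x => ?_
    exact LexPow.lt_of_eq_above_of_lt r (fun i hi => (hfix x i hi).symm) (by rw [hr]; linarith)

theorem not_rigid (hf : f.IsInducedBy g) {r j : Fin n}
    (hrj : (g - 1) r.castSucc j.castSucc ≠ 0)
    (habove : ∀ i, r.castSucc < i → ∀ j, (g - 1) i j = 0) : ¬f.Rigid := by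
  have hfix (x : LexPow R n) (i : Fin n) (hi : r < i) : f x i = x i :=
    hf.apply_eq_of_row_eq_zero (habove _ (Fin.castSucc_lt_castSucc_iff.2 hi)) x
  have hsurj (v : R) : ∃ x : LexPow R n, f x r - x r = v :=
    ⟨_, (hf.apply_single_sub r j ((v - (g - 1) r.castSucc (Fin.last n)) /
      (g - 1) r.castSucc j.castSucc)).trans (by rw [mul_div_cancel₀ _ hrj, sub_add_cancel])⟩
  obtain ⟨x, hx⟩ := hsurj 1
  obtain ⟨y, hy⟩ := hsurj (-1)
  exact f.not_rigid_of_lt_of_gt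
    (LexPow.lt_of_eq_above_of_lt r (fun i hi => (hfix x i hi).symm) (by linarith))
    (LexPow.lt_of_eq_above_of_lt r (hfix y) (by linarith))

end OPAffineAut.IsInducedBy

end InducedMap

theorem rigid_and_hyperbolic_iff_essentiallyHyperbolic_general (n : ℕ)
    (g : Matrix (Fin (n + 1)) (Fin (n + 1)) ℝ)
    (hut : ∀ i j : Fin (n + 1), j < i → g i j = 0)
    (hbr : g (Fin.last n) (Fin.last n) = 1)
    (hne : g ≠ 1)
    (f : OPAffineAut (LexPow ℝ n))
    (hf : ∀ (x : Fin n → ℝ) (i : Fin n),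
      LexPow.of.symm (f (LexPow.of x)) i =
        (∑ j : Fin n, g i.castSucc j.castSucc * x j) + g i.castSucc (Fin.last n)) :
    (f.Rigid ∧ f.Hyperbolic) ↔ EssentiallyHyperbolic g := by
  have hf : f.IsInducedBy g := hf
  rw [essentiallyHyperbolic_iff]
  constructor
  · rintro ⟨hrigid, -⟩
    obtain ⟨r, ⟨j, hrj⟩, habove⟩ := Matrix.exists_last_nonzero_row (sub_ne_zero.2 hne)
    obtain ⟨r, rfl⟩ := (Fin.exists_castSucc_eq (i := r)).2 fun h =>
      hrj (by rw [h]; exact sub_one_last_row_eq_zero hut hbr j)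
    have hsq (j : Fin n) : (g - 1) r.castSucc j.castSucc = 0 :=
      by_contra fun h => hf.not_rigid h habove hrigid
    refine ⟨r, ?_, hsq, habove⟩
    cases j using Fin.lastCases with
    | last => exact hrj
    | cast j => exact absurd (hsq j) hrj
  · rintro ⟨r, hb, hsq, habove⟩
    exact hf.rigid_and_hyperbolic hb hsq habove

/-- Let `g` be an `(n+1) × (n+1)` upper triangular real matrix with
positive diagonal entries, bottom-right entry `1`, and `g ≠ 1`, and let `f` be the induced
affine automorphism of `ℝ^n_lex`, `f(x)_i = ∑_j g_{i,j} x_j + g_{i,n+1}`. Then `f` is rigid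
and hyperbolic if and only if `g` is essentially hyperbolic. -/
theorem rigid_and_hyperbolic_iff_essentiallyHyperbolic (n : ℕ)
    (g : Matrix (Fin (n + 1)) (Fin (n + 1)) ℝ)
    (hut : ∀ i j : Fin (n + 1), j < i → g i j = 0)
    (hpos : ∀ i : Fin (n + 1), 0 < g i i)
    (hbr : g (Fin.last n) (Fin.last n) = 1)
    (hne : g ≠ 1)
    (f : OPAffineAut (LexPow ℝ n))
    (hf : ∀ (x : Fin n → ℝ) (i : Fin n),
      LexPow.of.symm (f (LexPow.of x)) i =
        (∑ j : Fin n, g i.castSucc j.castSucc * x j) + g i.castSucc (Fin.last n)) :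
    (f.Rigid ∧ f.Hyperbolic) ↔ EssentiallyHyperbolic g :=
  rigid_and_hyperbolic_iff_essentiallyHyperbolic_general n g hut hbr hne f hf
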